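/- Let L* ∈ R^{n1×n2} be a matrix of rank r with smallest positive singular value σ_r*, and let Z* = [U*; V*] be the balanced SVD factorization of L* (i.e., U* = Ũ Σ^{1/2}, V* = Ṽ Σ^{1/2} where L* = Ũ Σ Ṽᵀ is the SVD). Then for any Z = [U; V] ∈ R^{(n1+n2)×r}: d_P(Z, Z*)² ≤ (1/((√2 − 1)·σ_r*)) · (‖UVᵀ − L*‖²_F + (1/4)·‖UᵀU − VᵀV‖²_F). -/

import Mathlib

open Matrix

noncomputable def opNorm {m n : Type*} [Fintype m] [Fintype n] [DecidableEq n]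
    (A : Matrix m n ℝ) : ℝ :=
  ‖LinearMap.toContinuousLinearMap (Matrix.toEuclideanLin A)‖

noncomputable def frob {m n : Type*} [Fintype m] [Fintype n] (A : Matrix m n ℝ) : ℝ :=
  Real.sqrt (∑ i, ∑ j, (A i j) ^ 2)

noncomputable def frobS {n1 n2 : ℕ} (S : Finset (Fin n1 × Fin n2))
    (A : Matrix (Fin n1) (Fin n2) ℝ) : ℝ :=
  Real.sqrt (∑ p ∈ S, (A p.1 p.2) ^ 2)

noncomputable def dP {m : Type*} [Fintype m] {r : ℕ}
    (Z Z' : Matrix m (Fin r) ℝ) : ℝ :=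
  sInf { d | ∃ P : Matrix (Fin r) (Fin r) ℝ, Pᵀ * P = 1 ∧ d = frob (Z - Z' * P) }

/-!
Write `Z* = [U*; V*]`. Because `U*ᵀU* = V*ᵀV* = Σ` and `U*V*ᵀ = L*`, polarization turns
`‖ZZᵀ - Z*Z*ᵀ‖²` into `4‖UVᵀ - L*‖² + ‖UᵀU - VᵀV‖² - 2‖UᵀU* - VᵀV*‖²`, so it suffices to show
`2(√2 - 1) σ d_P(Z, Z*)² ≤ ‖ZZᵀ - Z*Z*ᵀ‖²` whenever `σ ≤ σ_min(Z*)²` (here `σ = 2σ_r*`).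
For this, take a singular value decomposition `Z*ᵀZ = O diag(e) Qᵀ`, obtained by maximizing
`tr(PᵀZ*ᵀZ)` over orthogonal `P`. Then `X = ZQ` and `Y = Z*O` satisfy `YᵀX = diag(e)` with `e ≥ 0`,
`d_P(Z, Z*) ≤ ‖X - Y‖` and `‖ZZᵀ - Z*Z*ᵀ‖² ≥ ∑ᵢ (‖xᵢ‖⁴ + ‖yᵢ‖⁴ - 2eᵢ²)`; comparing column by
column, with `eᵢ² ≤ ‖xᵢ‖²‖yᵢ‖²`, leaves a scalar inequality.
-/

section Frobenius
variable {m n p : Type*} [Fintype m] [Fintype n] [Fintype p]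

lemma frob_nonneg (A : Matrix m n ℝ) : 0 ≤ frob A := Real.sqrt_nonneg _

@[simp] lemma frob_zero : frob (0 : Matrix m n ℝ) = 0 := by simp [frob]

lemma frob_sq (A : Matrix m n ℝ) : frob A ^ 2 = ∑ i, ∑ j, A i j ^ 2 :=
  Real.sq_sqrt (by positivity)

lemma frob_transpose (A : Matrix m n ℝ) : frob Aᵀ = frob A := by
  rw [frob, frob, Finset.sum_comm]
  rfl

lemma frob_sq_eq_trace (A : Matrix m n ℝ) : frob A ^ 2 = trace (Aᵀ * A) := by
  rw [frob_sq, trace, Finset.sum_comm]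
  simp [mul_apply, pow_two]

lemma frob_mul_of_mul_transpose_eq_one [DecidableEq n] (A : Matrix m n ℝ) {Q : Matrix n n ℝ}
    (hQ : Q * Qᵀ = 1) : frob (A * Q) = frob A := by
  have h : frob (A * Q)ᵀ ^ 2 = frob Aᵀ ^ 2 := by
    simp only [frob_sq_eq_trace, transpose_transpose, transpose_mul, Matrix.mul_assoc,
      ← Matrix.mul_assoc Q, hQ, Matrix.one_mul]
  rwa [frob_transpose, frob_transpose, sq_eq_sq₀ (frob_nonneg _) (frob_nonneg _)] at h

lemma frob_diagonal_sq [DecidableEq n] (e : n → ℝ) : frob (diagonal e) ^ 2 = ∑ i, e i ^ 2 := by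
  simp [frob_sq, diagonal_apply, apply_ite (· ^ 2)]

lemma sum_sq_diag_le_frob_sq (M : Matrix n n ℝ) : ∑ i, M i i ^ 2 ≤ frob M ^ 2 := by
  rw [frob_sq]
  gcongr with i
  exact Finset.single_le_sum (fun j _ => sq_nonneg (M i j)) (Finset.mem_univ i)

lemma frob_add_sq (X Y : Matrix m n ℝ) :
    frob (X + Y) ^ 2 = frob (X - Y) ^ 2 + 4 * trace (Xᵀ * Y) := by
  have hYX : trace (Yᵀ * X) = trace (Xᵀ * Y) := by
    rw [← trace_transpose, transpose_mul, transpose_transpose]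
  simp only [frob_sq_eq_trace, transpose_add, transpose_sub, Matrix.add_mul, Matrix.mul_add,
    Matrix.sub_mul, Matrix.mul_sub, trace_add, trace_sub, hYX]
  ring

lemma frob_sub_sq_eq_sum_diag (X Y : Matrix m n ℝ) :
    frob (X - Y) ^ 2 = ∑ i, ((Xᵀ * X) i i - 2 * (Yᵀ * X) i i + (Yᵀ * Y) i i) := by
  rw [frob_sq, Finset.sum_comm]
  refine Finset.sum_congr rfl fun i _ => ?_
  simp only [mul_apply, transpose_apply, Matrix.sub_apply, Finset.mul_sum,
    ← Finset.sum_sub_distrib, ← Finset.sum_add_distrib]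
  exact Finset.sum_congr rfl fun k _ => by ring

lemma frob_mul_transpose_sub_mul_transpose_sq (A C : Matrix m p ℝ) (B D : Matrix n p ℝ) :
    frob (A * Bᵀ - C * Dᵀ) ^ 2 =
      trace (Aᵀ * A * (Bᵀ * B)) - 2 * trace (Aᵀ * C * (Dᵀ * B)) + trace (Cᵀ * C * (Dᵀ * D)) := by
  have cyc : ∀ (E F : Matrix m p ℝ) (G H : Matrix n p ℝ),
      trace ((E * Gᵀ)ᵀ * (F * Hᵀ)) = trace (Eᵀ * F * (Hᵀ * G)) := by
    intro E F G H
    rw [transpose_mul, transpose_transpose, Matrix.mul_assoc, trace_mul_comm]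
    simp only [Matrix.mul_assoc]
  have hCA : trace ((C * Dᵀ)ᵀ * (A * Bᵀ)) = trace ((A * Bᵀ)ᵀ * (C * Dᵀ)) := by
    rw [← trace_transpose, transpose_mul, transpose_transpose]
  rw [frob_sq_eq_trace, transpose_sub, Matrix.sub_mul, Matrix.mul_sub, Matrix.mul_sub,
    trace_sub, trace_sub, trace_sub, hCA, cyc, cyc, cyc]
  ring

lemma frob_mul_transpose_self_sub_sq (A C : Matrix m n ℝ) :
    frob (A * Aᵀ - C * Cᵀ) ^ 2 = frob (Aᵀ * A) ^ 2 - 2 * frob (Cᵀ * A) ^ 2 + frob (Cᵀ * C) ^ 2 := by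
  rw [frob_mul_transpose_sub_mul_transpose_sq]
  simp only [frob_sq_eq_trace, transpose_mul, transpose_transpose, Matrix.mul_assoc]

end Frobenius

lemma sq_transpose_mul_apply_le {m n : Type*} [Fintype m] (X Y : Matrix m n ℝ) (i : n) :
    (Yᵀ * X) i i ^ 2 ≤ (Xᵀ * X) i i * (Yᵀ * Y) i i := by
  simp only [mul_apply, transpose_apply]
  rw [mul_comm (∑ k, X k i * X k i)]
  simpa only [sq] using Finset.sum_mul_sq_le_sq_mul_sq Finset.univ (fun k => Y k i) (fun k => X k i)

lemma mul_dotProduct_self_le_of_transpose_mul_self_eq_diagonal {m n : Type*} [Fintype m]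
    [Fintype n] [DecidableEq n] {A : Matrix m n ℝ} {d : n → ℝ} {σ : ℝ}
    (hA : Aᵀ * A = diagonal d) (hd : ∀ i, σ ≤ d i) (v : n → ℝ) :
    σ * (v ⬝ᵥ v) ≤ A *ᵥ v ⬝ᵥ A *ᵥ v := by
  have hgram : v ⬝ᵥ (Aᵀ * A) *ᵥ v = A *ᵥ v ⬝ᵥ A *ᵥ v := by
    rw [← mulVec_mulVec, dotProduct_mulVec, vecMul_transpose]
  rw [← hgram, hA]
  simp only [dotProduct, mulVec_diagonal, Finset.mul_sum]
  exact Finset.sum_le_sum fun i _ => by nlinarith [hd i, mul_self_nonneg (v i)]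

section Orthogonal
variable {n : Type*} [Fintype n] [DecidableEq n]

def IsTraceMaximal (K : Matrix n n ℝ) : Prop :=
  ∀ R : Matrix n n ℝ, Rᵀ * R = 1 → trace (Rᵀ * K) ≤ trace K

lemma isCompact_setOf_transpose_mul_self_eq_one : IsCompact {P : Matrix n n ℝ | Pᵀ * P = 1} := by
  have hbox : IsCompact ((Set.univ.pi fun _ : n => Set.univ.pi fun _ : n => Set.Icc (-1 : ℝ) 1) :
      Set (Matrix n n ℝ)) :=
    isCompact_univ_pi fun _ => isCompact_univ_pi fun _ => isCompact_Icc
  refine hbox.of_isClosed_subset (isClosed_eq (by fun_prop) continuous_const) ?_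
  intro (P : Matrix n n ℝ) (hP : Pᵀ * P = 1) i _ j _
  have hcol : ∑ k, P k j ^ 2 = 1 := by
    simpa [mul_apply, one_apply, sq] using congrFun (congrFun hP j) j
  have hle : P i j ^ 2 ≤ 1 :=
    hcol ▸ Finset.single_le_sum (fun k _ => sq_nonneg (P k j)) (Finset.mem_univ i)
  exact abs_le.mp (abs_le_one_iff_mul_self_le_one.mpr (by nlinarith))

lemma exists_isTraceMaximal_transpose_mul (B : Matrix n n ℝ) :
    ∃ P : Matrix n n ℝ, Pᵀ * P = 1 ∧ IsTraceMaximal (Pᵀ * B) := by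
  obtain ⟨P, hP, hdefect_m⟩ := isCompact_setOf_transpose_mul_self_eq_one.exists_isMaxOn ⟨1, by simp⟩
    (f := fun P : Matrix n n ℝ => trace (Pᵀ * B)) (by fun_prop)
  refine ⟨P, hP, fun R hR => ?_⟩
  have hPR : (P * R)ᵀ * (P * R) = 1 := by
    rw [transpose_mul, Matrix.mul_assoc, ← Matrix.mul_assoc Pᵀ, hP, Matrix.one_mul, hR]
  simpa [transpose_mul, Matrix.mul_assoc] using hdefect_m hPR

lemma IsTraceMaximal.conj {K Q : Matrix n n ℝ} (hK : IsTraceMaximal K) (hQ : Qᵀ * Q = 1) :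
    IsTraceMaximal (Qᵀ * K * Q) := by
  have hQ' : Q * Qᵀ = 1 := mul_eq_one_comm.mp hQ
  intro R hR
  have hQRQ : (Q * R * Qᵀ)ᵀ * (Q * R * Qᵀ) = 1 := by
    simp only [transpose_mul, transpose_transpose, Matrix.mul_assoc]
    rw [← Matrix.mul_assoc Qᵀ Q, hQ, Matrix.one_mul, ← Matrix.mul_assoc Rᵀ R, hR, Matrix.one_mul,
      hQ']
  calc trace (Rᵀ * (Qᵀ * K * Q)) = trace (Q * (Rᵀ * Qᵀ * K)) := by
        rw [trace_mul_comm Q]; simp only [Matrix.mul_assoc]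
    _ = trace ((Q * R * Qᵀ)ᵀ * K) := by
        simp only [transpose_mul, transpose_transpose, Matrix.mul_assoc]
    _ ≤ trace K := hK _ hQRQ
    _ = trace (Qᵀ * K * Q) := by rw [trace_mul_comm, ← Matrix.mul_assoc, hQ', Matrix.one_mul]

lemma IsTraceMaximal.diag_nonneg {K : Matrix n n ℝ} (hK : IsTraceMaximal K) (i : n) :
    0 ≤ K i i := by
  set R : Matrix n n ℝ := 1 - single i i 2
  have hRt : Rᵀ = R := by rw [transpose_sub, transpose_one, transpose_single]
  have hR : Rᵀ * R = 1 := by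
    have : single i i (2 : ℝ) * single i i 2 = single i i 2 + single i i 2 := by
      rw [single_mul_single_same, ← single_add]; norm_num
    rw [hRt, Matrix.sub_mul, Matrix.mul_sub, Matrix.mul_sub, this]
    simp
  have h := hK R hR
  rw [hRt, Matrix.sub_mul, Matrix.one_mul, trace_sub, trace_single_mul, smul_eq_mul] at h
  linarith

def givens (i j : n) (c s : ℝ) : Matrix n n ℝ :=
  1 + (c - 1) • (single i i 1 + single j j 1) + s • (single j i 1 - single i j 1)

lemma givens_transpose_mul_self {i j : n} (hij : i ≠ j) {c s : ℝ} (hcs : c ^ 2 + s ^ 2 = 1) :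
    (givens i j c s)ᵀ * givens i j c s = 1 := by
  set E : Matrix n n ℝ := single i i 1 + single j j 1
  set F : Matrix n n ℝ := single j i 1 - single i j 1
  have hEE : E * E = E := by simp [E, add_mul, mul_add, hij, hij.symm]
  have hEF : E * F = F := by simp [E, F, add_mul, mul_sub, hij, hij.symm]
  have hFE : F * E = F := by simp [E, F, sub_mul, mul_add, hij, hij.symm]; abel
  have hFF : F * F = -E := by simp [E, F, sub_mul, mul_sub, hij, hij.symm]; abel
  have hgt : (givens i j c s)ᵀ = 1 + (c - 1) • E - s • F := by
    simp only [givens, transpose_add, transpose_sub, transpose_smul, transpose_one,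
      transpose_single, E, F]
    module
  have hexp : (1 + (c - 1) • E - s • F) * (1 + (c - 1) • E + s • F) =
      1 + (c ^ 2 + s ^ 2 - 1) • E := by
    simp only [add_mul, mul_add, sub_mul, Matrix.one_mul, Matrix.mul_one, smul_mul_assoc,
      mul_smul_comm, hEE, hEF, hFE, hFF, smul_neg]
    module
  rw [hgt, givens, hexp, hcs, sub_self, zero_smul, add_zero]

lemma trace_givens_transpose_mul (i j : n) (c s : ℝ) (K : Matrix n n ℝ) :
    trace ((givens i j c s)ᵀ * K) =
      trace K + (c - 1) * (K i i + K j j) - s * (K i j - K j i) := by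
  simp only [givens, transpose_add, transpose_sub, transpose_smul, transpose_one,
    transpose_single, add_mul, sub_mul, smul_mul_assoc, Matrix.one_mul, trace_add, trace_sub,
    trace_smul, trace_single_mul, smul_eq_mul]
  ring

lemma IsTraceMaximal.transpose_eq {K : Matrix n n ℝ} (hK : IsTraceMaximal K) : Kᵀ = K := by
  ext i j
  rcases eq_or_ne j i with rfl | hji
  · rfl
  -- `((1 - t²) / (1 + t²), 2t / (1 + t²))` runs over the unit circle, so maximality at the
  -- identity makes a quadratic in `t` nonnegative, and its linear coefficient must vanish
  have hquad : ∀ t : ℝ, 0 ≤ (K i i + K j j) * (t * t) + (K i j - K j i) * t + 0 := by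
    intro t
    have hden : 0 < 1 + t ^ 2 := by positivity
    have hcs : ((1 - t ^ 2) / (1 + t ^ 2)) ^ 2 + (2 * t / (1 + t ^ 2)) ^ 2 = 1 := by
      field_simp; ring
    have h := hK _ (givens_transpose_mul_self hji.symm hcs)
    rw [trace_givens_transpose_mul] at h
    have h' : (1 + t ^ 2) * (((1 - t ^ 2) / (1 + t ^ 2) - 1) * (K i i + K j j) -
        2 * t / (1 + t ^ 2) * (K i j - K j i)) ≤ 0 :=
      mul_nonpos_of_nonneg_of_nonpos hden.le (by linarith)
    field_simp at h'
    nlinarith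
  have hd := discrim_le_zero hquad
  rw [discrim] at hd
  rw [transpose_apply]
  nlinarith [sq_nonneg (K i j - K j i)]

theorem exists_orthogonal_transpose_mul_mul_eq_diagonal (B : Matrix n n ℝ) :
    ∃ O Q : Matrix n n ℝ, Oᵀ * O = 1 ∧ Qᵀ * Q = 1 ∧
      ∃ e : n → ℝ, 0 ≤ e ∧ Oᵀ * B * Q = diagonal e := by
  obtain ⟨P, hP, hK⟩ := exists_isTraceMaximal_transpose_mul B
  have hherm : (Pᵀ * B).IsHermitian := by
    rw [IsHermitian, conjTranspose_eq_transpose_of_trivial]; exact hK.transpose_eq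
  set Q : Matrix n n ℝ := (hherm.eigenvectorUnitary : Matrix n n ℝ)
  have hQ : Qᵀ * Q = 1 := by
    simpa [Matrix.star_eq_conjTranspose] using Unitary.coe_star_mul_self hherm.eigenvectorUnitary
  have hdiag : Qᵀ * (Pᵀ * B) * Q = diagonal hherm.eigenvalues := by
    simpa [Unitary.conjStarAlgAut_star_apply, Matrix.star_eq_conjTranspose] using
      hherm.conjStarAlgAut_star_eigenvectorUnitary
  refine ⟨P * Q, Q, ?_, hQ, hherm.eigenvalues, fun i => ?_, ?_⟩
  · rw [transpose_mul, Matrix.mul_assoc, ← Matrix.mul_assoc Pᵀ, hP, Matrix.one_mul, hQ]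
  · simpa [hdiag] using (hK.conj hQ).diag_nonneg i
  · rw [← hdiag, transpose_mul]; simp only [Matrix.mul_assoc]

end Orthogonal

lemma two_mul_sqrt_two_sub_one_mul_le {s w g k : ℝ} (hs : 0 ≤ s) (hw : 0 ≤ w) (hg : s ≤ g)
    (hk : 0 ≤ k) (hkwg : k ^ 2 ≤ w * g) :
    2 * (√2 - 1) * s * (w - 2 * k + g) ≤ w ^ 2 + g ^ 2 - 2 * k ^ 2 := by
  have h2 : √2 ^ 2 = 2 := Real.sq_sqrt zero_le_two
  have h2lo : 1 ≤ √2 := Real.one_le_sqrt.mpr one_le_two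
  have h2hi : √2 ≤ 3 / 2 := by nlinarith
  set c := 2 * (√2 - 1)
  -- `c` is the largest constant for which the case `k = 0` holds (equality at `w = c s / 2`,
  -- `g = s`)
  have hdefect_zero : 0 ≤ w ^ 2 + g ^ 2 - c * s * (w + g) := by
    have hsum_sq : w ^ 2 + g ^ 2 - c * s * (w + g) =
        (w - (√2 - 1) * s) ^ 2 + (g - s) * (g + (3 - 2 * √2) * s) + (2 - √2 ^ 2) * s ^ 2 := by
      ring
    rw [hsum_sq, h2]
    nlinarith [sq_nonneg (w - (√2 - 1) * s), mul_nonneg (sub_nonneg.2 hg)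
      (by nlinarith : 0 ≤ g + (3 - 2 * √2) * s)]
  set m := √(w * g)
  have hm0 : 0 ≤ m := Real.sqrt_nonneg _
  have hm2 : m ^ 2 = w * g := Real.sq_sqrt (mul_nonneg hw (hs.trans hg))
  have hkm : k ≤ m := Real.le_sqrt_of_sq_le hkwg
  -- the defect is concave in `k`, so it is controlled by its values at `k = 0` and `k = m`
  have hscaled : 0 ≤ m * (w ^ 2 + g ^ 2 - 2 * k ^ 2 - c * s * (w - 2 * k + g)) := by
    have h2m : 2 * m ≤ w + g := by nlinarith [sq_nonneg (w - g)]
    have hdefect_m : 0 ≤ (w + g - 2 * m) * (w + g + 2 * m - c * s) :=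
      mul_nonneg (by linarith) (by nlinarith)
    nlinarith [mul_nonneg (sub_nonneg.2 hkm) hdefect_zero, mul_nonneg hk hdefect_m,
      mul_nonneg (mul_nonneg hk hm0) (sub_nonneg.2 hkm)]
  rcases hm0.eq_or_lt with hm | hm
  · have : k = 0 := le_antisymm (hm ▸ hkm) hk
    subst this
    linarith
  · linarith [(mul_nonneg_iff_of_pos_left hm).mp hscaled]

theorem two_mul_sqrt_two_sub_one_mul_frob_sub_sq_le {m n : Type*} [Fintype m] [Fintype n]
    [DecidableEq n] {X Y : Matrix m n ℝ} {e : n → ℝ} {σ : ℝ} (hσ : 0 ≤ σ)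
    (hYX : Yᵀ * X = diagonal e) (he : 0 ≤ e) (hY : ∀ i, σ ≤ (Yᵀ * Y) i i) :
    2 * (√2 - 1) * σ * frob (X - Y) ^ 2 ≤ frob (X * Xᵀ - Y * Yᵀ) ^ 2 := by
  have hdiag (i : n) : (Yᵀ * X) i i = e i := by simp [hYX]
  have hX (i : n) : 0 ≤ (Xᵀ * X) i i := by
    simpa using (posSemidef_conjTranspose_mul_self X).diag_nonneg (i := i)
  calc 2 * (√2 - 1) * σ * frob (X - Y) ^ 2
      = ∑ i, 2 * (√2 - 1) * σ * ((Xᵀ * X) i i - 2 * e i + (Yᵀ * Y) i i) := by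
        simp only [frob_sub_sq_eq_sum_diag, Finset.mul_sum, hdiag]
    _ ≤ ∑ i, ((Xᵀ * X) i i ^ 2 + (Yᵀ * Y) i i ^ 2 - 2 * e i ^ 2) := by
        gcongr with i
        exact two_mul_sqrt_two_sub_one_mul_le hσ (hX i) (hY i) (he i)
          (hdiag i ▸ sq_transpose_mul_apply_le X Y i)
    _ = ∑ i, (Xᵀ * X) i i ^ 2 + ∑ i, (Yᵀ * Y) i i ^ 2 - 2 * frob (Yᵀ * X) ^ 2 := by
        rw [hYX, frob_diagonal_sq, Finset.mul_sum, ← Finset.sum_add_distrib,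
          ← Finset.sum_sub_distrib]
    _ ≤ frob (Xᵀ * X) ^ 2 + frob (Yᵀ * Y) ^ 2 - 2 * frob (Yᵀ * X) ^ 2 := by
        gcongr <;> exact sum_sq_diag_le_frob_sq _
    _ = frob (X * Xᵀ - Y * Yᵀ) ^ 2 := by
        rw [frob_mul_transpose_self_sub_sq]; ring

section Procrustes
variable {m : Type*} [Fintype m] {r : ℕ}

lemma dP_nonneg (Z Z' : Matrix m (Fin r) ℝ) : 0 ≤ dP Z Z' :=
  Real.sInf_nonneg <| by rintro d ⟨P, -, rfl⟩; exact frob_nonneg _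

lemma dP_le_frob (Z Z' : Matrix m (Fin r) ℝ) {P : Matrix (Fin r) (Fin r) ℝ} (hP : Pᵀ * P = 1) :
    dP Z Z' ≤ frob (Z - Z' * P) :=
  csInf_le ⟨0, by rintro d ⟨Q, -, rfl⟩; exact frob_nonneg _⟩ ⟨P, hP, rfl⟩

theorem two_mul_sqrt_two_sub_one_mul_dP_sq_le (Z Zs : Matrix m (Fin r) ℝ) {σ : ℝ} (hσ : 0 ≤ σ)
    (hZs : ∀ v, σ * (v ⬝ᵥ v) ≤ Zs *ᵥ v ⬝ᵥ Zs *ᵥ v) :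
    2 * (√2 - 1) * σ * dP Z Zs ^ 2 ≤ frob (Z * Zᵀ - Zs * Zsᵀ) ^ 2 := by
  obtain ⟨O, Q, hO, hQ, e, he, hOQ⟩ := exists_orthogonal_transpose_mul_mul_eq_diagonal (Zsᵀ * Z)
  have hO' : O * Oᵀ = 1 := mul_eq_one_comm.mp hO
  have hQ' : Q * Qᵀ = 1 := mul_eq_one_comm.mp hQ
  have hP : (O * Qᵀ)ᵀ * (O * Qᵀ) = 1 := by
    rw [transpose_mul, transpose_transpose, Matrix.mul_assoc, ← Matrix.mul_assoc Oᵀ, hO,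
      Matrix.one_mul, hQ']
  have hdist : frob (Z - Zs * (O * Qᵀ)) = frob (Z * Q - Zs * O) := by
    rw [← frob_mul_of_mul_transpose_eq_one _ hQ', Matrix.sub_mul, Matrix.mul_assoc Zs,
      Matrix.mul_assoc O, hQ, Matrix.mul_one]
  have hgram : Z * Zᵀ - Zs * Zsᵀ = Z * Q * (Z * Q)ᵀ - Zs * O * (Zs * O)ᵀ := by
    simp only [transpose_mul, Matrix.mul_assoc, ← Matrix.mul_assoc Q, ← Matrix.mul_assoc O, hQ',
      hO', Matrix.one_mul]
  have hYX : (Zs * O)ᵀ * (Z * Q) = diagonal e := by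
    rw [← hOQ, transpose_mul]; simp only [Matrix.mul_assoc]
  have hY (i : Fin r) : σ ≤ ((Zs * O)ᵀ * (Zs * O)) i i := by
    calc σ = σ * (Oᵀ * O) i i := by rw [hO, one_apply_eq, mul_one]
      _ ≤ _ := hZs (Oᵀ i)
  have hcoef : 0 ≤ 2 * (√2 - 1) * σ := by
    have := Real.one_le_sqrt.mpr one_le_two; positivity
  calc 2 * (√2 - 1) * σ * dP Z Zs ^ 2
      ≤ 2 * (√2 - 1) * σ * frob (Z * Q - Zs * O) ^ 2 := by
        rw [← hdist]; gcongr; exacts [dP_nonneg _ _, dP_le_frob _ _ hP]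
    _ ≤ frob (Z * Zᵀ - Zs * Zsᵀ) ^ 2 := by
        rw [hgram]; exact two_mul_sqrt_two_sub_one_mul_frob_sub_sq_le hσ hYX he hY

end Procrustes

theorem frob_fromRows_mul_transpose_sub_sq {m₁ m₂ n : Type*} [Fintype m₁] [Fintype m₂]
    [Fintype n] (U Us : Matrix m₁ n ℝ) (V Vs : Matrix m₂ n ℝ) :
    frob (fromRows U V * (fromRows U V)ᵀ - fromRows Us Vs * (fromRows Us Vs)ᵀ) ^ 2 +
        2 * frob (Uᵀ * Us - Vᵀ * Vs) ^ 2 =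
      4 * frob (U * Vᵀ - Us * Vsᵀ) ^ 2 + frob (Uᵀ * U - Vᵀ * V) ^ 2 +
        frob (Usᵀ * Us - Vsᵀ * Vs) ^ 2 := by
  have hcross : frob (Usᵀ * U - Vsᵀ * V) = frob (Uᵀ * Us - Vᵀ * Vs) := by
    rw [← frob_transpose, transpose_sub, transpose_mul, transpose_mul, transpose_transpose,
      transpose_transpose]
  rw [frob_mul_transpose_self_sub_sq, frob_mul_transpose_sub_mul_transpose_sq]
  simp only [transpose_fromRows, fromCols_mul_fromRows, frob_add_sq, hcross, transpose_mul,
    transpose_transpose]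
  ring

theorem dP_sq_le_of_balanced_svd_general {n1 n2 r : ℕ}
    (Lstar : Matrix (Fin n1) (Fin n2) ℝ)
    (Uo : Matrix (Fin n1) (Fin r) ℝ) (Vo : Matrix (Fin n2) (Fin r) ℝ)
    (s : Fin r → ℝ) (hs : ∀ i, 0 < s i)
    (hUo : Uoᵀ * Uo = 1) (hVo : Voᵀ * Vo = 1)
    (hL : Lstar = Uo * Matrix.diagonal s * Voᵀ)
    (σr : ℝ) (hσr : IsLeast (Set.range s) σr)
    (U : Matrix (Fin n1) (Fin r) ℝ) (V : Matrix (Fin n2) (Fin r) ℝ) :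
    (dP (Matrix.fromRows U V)
        (Matrix.fromRows (Uo * Matrix.diagonal fun i => Real.sqrt (s i))
          (Vo * Matrix.diagonal fun i => Real.sqrt (s i)))) ^ 2 ≤
      (1 / ((Real.sqrt 2 - 1) * σr)) *
        ((frob (U * Vᵀ - Lstar)) ^ 2 + (1 / 4) * (frob (Uᵀ * U - Vᵀ * V)) ^ 2) := by
  obtain ⟨⟨i₀, rfl⟩, hmin⟩ := hσr
  set D : Matrix (Fin r) (Fin r) ℝ := diagonal fun i => √(s i)
  have hDD : D * D = diagonal s := by
    rw [diagonal_mul_diagonal]; congr; ext i; exact Real.mul_self_sqrt (hs i).le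
  have hgram {k : ℕ} {W : Matrix (Fin k) (Fin r) ℝ} (hW : Wᵀ * W = 1) :
      (W * D)ᵀ * (W * D) = diagonal s := by
    rw [transpose_mul, diagonal_transpose, Matrix.mul_assoc, ← Matrix.mul_assoc Wᵀ, hW,
      Matrix.one_mul, hDD]
  have hLs : Uo * D * (Vo * D)ᵀ = Lstar := by
    rw [hL, transpose_mul, diagonal_transpose, Matrix.mul_assoc, ← Matrix.mul_assoc D, hDD,
      Matrix.mul_assoc]
  have hpolar := frob_fromRows_mul_transpose_sub_sq U (Uo * D) V (Vo * D)
  rw [hgram hUo, hgram hVo, sub_self, frob_zero, hLs] at hpolar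
  have hZs := mul_dotProduct_self_le_of_transpose_mul_self_eq_diagonal
    (A := fromRows (Uo * D) (Vo * D)) (d := fun i => s i + s i) (σ := 2 * s i₀)
    (by rw [transpose_fromRows, fromCols_mul_fromRows, hgram hUo, hgram hVo, diagonal_add])
    (fun i => show _ ≤ s i + s i by linarith [hmin ⟨i, rfl⟩])
  have hdist := two_mul_sqrt_two_sub_one_mul_dP_sq_le (fromRows U V) _ (by linarith [hs i₀]) hZs
  have hpos : 0 < (√2 - 1) * s i₀ :=
    mul_pos (sub_pos.mpr Real.one_lt_sqrt_two) (hs i₀)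
  rw [one_div_mul_eq_div, le_div_iff₀ hpos]
  linarith [sq_nonneg (frob (Uᵀ * (Uo * D) - Vᵀ * (Vo * D)))]

/-- Lemma SM2.4 of Zilber–Nadler: if `Z* = [ŨΣ^{1/2}; ṼΣ^{1/2}]` is the balanced
SVD factorization of a rank-`r` matrix `L* = ŨΣṼᵀ`, whose smallest positive
singular value is `σr`, then for any `Z = [U; V]`,
`d_P(Z, Z*)² ≤ (‖UVᵀ − L*‖²_F + (1/4)‖UᵀU − VᵀV‖²_F) / ((√2 − 1)σr)`. -/
theorem dP_sq_le_of_balanced_svd {n1 n2 r : ℕ}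
    (Lstar : Matrix (Fin n1) (Fin n2) ℝ) (hrank : Lstar.rank = r)
    (Uo : Matrix (Fin n1) (Fin r) ℝ) (Vo : Matrix (Fin n2) (Fin r) ℝ)
    (s : Fin r → ℝ) (hs : ∀ i, 0 < s i)
    (hUo : Uoᵀ * Uo = 1) (hVo : Voᵀ * Vo = 1)
    (hL : Lstar = Uo * Matrix.diagonal s * Voᵀ)
    (σr : ℝ) (hσr : IsLeast (Set.range s) σr)
    (U : Matrix (Fin n1) (Fin r) ℝ) (V : Matrix (Fin n2) (Fin r) ℝ) :
    (dP (Matrix.fromRows U V)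
        (Matrix.fromRows (Uo * Matrix.diagonal fun i => Real.sqrt (s i))
          (Vo * Matrix.diagonal fun i => Real.sqrt (s i)))) ^ 2 ≤
      (1 / ((Real.sqrt 2 - 1) * σr)) *
        ((frob (U * Vᵀ - Lstar)) ^ 2 + (1 / 4) * (frob (Uᵀ * U - Vᵀ * V)) ^ 2) :=
  dP_sq_le_of_balanced_svd_general Lstar Uo Vo s hs hUo hVo hL σr hσr U V
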